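/- Let f : [0,1] → ℝ be twice continuously differentiable with ‖f‖_∞, ‖f'‖_∞, ‖f''‖_∞ ≤ M, and let K be the Epanechnikov kernel. Then for any t ∈ (0,1) and any 0 < h < min(t, 1−t), the kernel-smoothed bias satisfies |∫ K_h(u − t)·f(u) du − f(t)| ≤ M·h²/10, where K_h(v) = K(v/h)/h. -/

import Mathlib

open MeasureTheory

/-- The Epanechnikov kernel. -/
noncomputable def epanechnikov (u : ℝ) : ℝ := if |u| ≤ 1 then 0.75 * (1 - u ^ 2) else 0

/-- Second-order Taylor remainder bound on `[0,1]`. -/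
lemma taylor_aux_stmt13 (f f' f'' : ℝ → ℝ) (M : ℝ)
    (hd1 : ∀ s ∈ Set.Icc (0:ℝ) 1, HasDerivAt f (f' s) s)
    (hd2 : ∀ s ∈ Set.Icc (0:ℝ) 1, HasDerivAt f' (f'' s) s)
    (hb2 : ∀ s ∈ Set.Icc (0:ℝ) 1, |f'' s| ≤ M)
    (t x : ℝ) (ht : t ∈ Set.Icc (0:ℝ) 1) (hx : x ∈ Set.Icc (0:ℝ) 1) :
    |f x - f t - f' t * (x - t)| ≤ M / 2 * (x - t) ^ 2 := by
  have hM : 0 ≤ M := le_trans (abs_nonneg _) (hb2 t ht)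
  have lip : ∀ s ∈ Set.Icc (0:ℝ) 1, |f' s - f' t| ≤ M * |s - t| := by
    intro s hs
    exact Convex.norm_image_sub_le_of_norm_hasDerivWithin_le
      (fun y hy => (hd2 y hy).hasDerivWithinAt) (fun y hy => hb2 y hy) (convex_Icc (0:ℝ) 1) ht hs
  have hsub : Set.uIcc t x ⊆ Set.Icc 0 1 := Set.uIcc_subset_Icc ht hx
  have cf' : ContinuousOn f' (Set.Icc (0:ℝ) 1) :=
    fun s hs => (hd2 s hs).continuousAt.continuousWithinAt
  have hint : IntervalIntegrable f' volume t x := (cf'.mono hsub).intervalIntegrable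
  have ftc : ∫ s in t..x, f' s = f x - f t :=
    intervalIntegral.integral_eq_sub_of_hasDerivAt (fun s hs => hd1 s (hsub hs)) hint
  have key : f x - f t - f' t * (x - t) = ∫ s in t..x, (f' s - f' t) := by
    rw [intervalIntegral.integral_sub hint intervalIntegrable_const, ftc,
      intervalIntegral.integral_const, smul_eq_mul]
    ring
  rw [key]
  rcases le_total t x with hc | hc
  · have hb : ∀ᵐ s ∂(volume.restrict (Set.uIoc t x)), ‖f' s - f' t‖ ≤ M * (s - t) := by
      rw [ae_restrict_iff' measurableSet_uIoc]
      refine Filter.Eventually.of_forall fun s hs => ?_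
      rw [Set.uIoc_of_le hc] at hs
      have hs' : s ∈ Set.Icc (0:ℝ) 1 := hsub (by
        rw [Set.uIcc_of_le hc]; exact ⟨le_of_lt hs.1, hs.2⟩)
      have := lip s hs'
      rwa [abs_of_nonneg (by linarith [hs.1.le] : (0:ℝ) ≤ s - t)] at this
    have hgint : IntervalIntegrable (fun s => M * (s - t)) volume t x :=
      (by continuity : Continuous fun s : ℝ => M * (s - t)).intervalIntegrable _ _
    have := intervalIntegral.norm_integral_le_abs_of_norm_le hb hgint
    refine le_trans this (le_of_eq ?_)
    have : ∫ s in t..x, M * (s - t) = M * ((x - t)^2 / 2) := by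
      rw [intervalIntegral.integral_const_mul]
      have : ∫ s in t..x, (s - t) = (x - t)^2 / 2 := by
        rw [intervalIntegral.integral_sub (intervalIntegral.intervalIntegrable_id)
          intervalIntegrable_const, integral_id, intervalIntegral.integral_const, smul_eq_mul]
        ring
      rw [this]
    rw [this, abs_of_nonneg (by positivity)]
    ring
  · have hb : ∀ᵐ s ∂(volume.restrict (Set.uIoc t x)), ‖f' s - f' t‖ ≤ M * (t - s) := by
      rw [ae_restrict_iff' measurableSet_uIoc]
      refine Filter.Eventually.of_forall fun s hs => ?_
      rw [Set.uIoc_of_ge hc] at hs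
      have hs' : s ∈ Set.Icc (0:ℝ) 1 := hsub (by
        rw [Set.uIcc_of_ge hc]; exact ⟨le_of_lt hs.1, hs.2⟩)
      have := lip s hs'
      rwa [abs_of_nonpos (by linarith [hs.2] : s - t ≤ 0), neg_sub] at this
    have hgint : IntervalIntegrable (fun s => M * (t - s)) volume t x :=
      (by continuity : Continuous fun s : ℝ => M * (t - s)).intervalIntegrable _ _
    have := intervalIntegral.norm_integral_le_abs_of_norm_le hb hgint
    refine le_trans this (le_of_eq ?_)
    have : ∫ s in t..x, M * (t - s) = M * (-((x - t)^2 / 2)) := by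
      rw [intervalIntegral.integral_const_mul]
      have : ∫ s in t..x, (t - s) = -((x - t)^2 / 2) := by
        rw [intervalIntegral.integral_sub intervalIntegrable_const
          (intervalIntegral.intervalIntegrable_id), integral_id, intervalIntegral.integral_const,
          smul_eq_mul]
        ring
      rw [this]
    rw [this, abs_of_nonpos (by nlinarith [sq_nonneg (x - t)])]
    ring

/-- Second-order bias bound for the Epanechnikov kernel smoother: if `f` is twice
differentiable with `‖f‖_∞, ‖f'‖_∞, ‖f''‖_∞ ≤ M` on `[0,1]`, then for `t ∈ (0,1)` and
`0 < h < min t (1−t)`, `|∫ K_h(u−t) f(u) du − f(t)| ≤ M h² / 10`. -/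
theorem stmt_13 (f f' f'' : ℝ → ℝ) (M : ℝ)
    (hd1 : ∀ s ∈ Set.Icc (0:ℝ) 1, HasDerivAt f (f' s) s)
    (hd2 : ∀ s ∈ Set.Icc (0:ℝ) 1, HasDerivAt f' (f'' s) s)
    (hc2 : ContinuousOn f'' (Set.Icc (0:ℝ) 1))
    (hb0 : ∀ s ∈ Set.Icc (0:ℝ) 1, |f s| ≤ M)
    (hb1 : ∀ s ∈ Set.Icc (0:ℝ) 1, |f' s| ≤ M)
    (hb2 : ∀ s ∈ Set.Icc (0:ℝ) 1, |f'' s| ≤ M)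
    (t h : ℝ) (ht : t ∈ Set.Ioo (0:ℝ) 1) (hh : 0 < h) (hh' : h < min t (1 - t)) :
    |(∫ u : ℝ, epanechnikov ((u - t) / h) / h * f u) - f t| ≤ M * h ^ 2 / 10 := by
  obtain ⟨hht, hh1t⟩ := lt_min_iff.mp hh'
  have hne : h ≠ 0 := ne_of_gt hh
  set I : Set ℝ := Set.Icc (-1 : ℝ) 1 with hI
  -- Step 1: translate
  have e1 : (∫ u : ℝ, epanechnikov ((u - t) / h) / h * f u)
      = ∫ w : ℝ, epanechnikov (w / h) / h * f (t + w) := by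
    rw [← MeasureTheory.integral_sub_right_eq_self
      (fun w => epanechnikov (w / h) / h * f (t + w)) t]
    congr 1; funext u
    simp
  -- Step 2: rescale
  have e2 : (∫ w : ℝ, epanechnikov (w / h) / h * f (t + w))
      = ∫ v : ℝ, epanechnikov v * f (t + h * v) := by
    have h1 : ∀ w : ℝ, epanechnikov (w / h) / h * f (t + w)
        = (epanechnikov (w / h) * f (t + h * (w / h))) * h⁻¹ := by
      intro w; rw [mul_div_cancel₀ _ hne]; ring
    simp_rw [h1]
    rw [integral_mul_const,
      MeasureTheory.Measure.integral_comp_div (fun v => epanechnikov v * f (t + h * v)) h,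
      abs_of_pos hh, smul_eq_mul]
    field_simp
  -- Step 3: restrict to [-1,1]
  have e3 : (∫ v : ℝ, epanechnikov v * f (t + h * v))
      = ∫ v in I, epanechnikov v * f (t + h * v) := by
    refine (setIntegral_eq_integral_of_forall_compl_eq_zero fun v hv => ?_).symm
    have hv' : ¬ |v| ≤ 1 := fun hc => hv (Set.mem_Icc.mpr (abs_le.mp hc))
    simp [epanechnikov, hv']
  -- Step 4: unfold kernel on [-1,1]
  have e4 : (∫ v in I, epanechnikov v * f (t + h * v))
      = ∫ v in I, (0.75 * (1 - v ^ 2)) * f (t + h * v) := by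
    refine setIntegral_congr_fun measurableSet_Icc fun v hv => ?_
    simp [epanechnikov, abs_le.mpr (Set.mem_Icc.mp hv)]
  rw [e1, e2, e3, e4]
  -- preliminaries
  have hmap : ∀ v ∈ I, t + h * v ∈ Set.Icc (0:ℝ) 1 := by
    intro v hv
    obtain ⟨hv1, hv2⟩ := Set.mem_Icc.mp hv
    constructor <;> nlinarith [ht.1, ht.2]
  have cf : ContinuousOn f (Set.Icc (0:ℝ) 1) :=
    fun s hs => (hd1 s hs).continuousAt.continuousWithinAt
  have cphi : ContinuousOn (fun v => f (t + h * v)) I := by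
    have : ContinuousOn (f ∘ (fun v => t + h * v)) I :=
      cf.comp ((continuous_const.add (continuous_const.mul continuous_id)).continuousOn) hmap
    exact this
  have cg : Continuous (fun v : ℝ => 0.75 * (1 - v ^ 2)) := continuous_const.mul (continuous_const.sub (continuous_pow 2))
  have hcomp : IsCompact I := isCompact_Icc
  -- moments of the kernel
  have ig0 : ∫ v in I, (0.75 * (1 - v ^ 2)) = 1 := by
    rw [hI, MeasureTheory.integral_Icc_eq_integral_Ioc,
      ← intervalIntegral.integral_of_le (by norm_num : (-1:ℝ) ≤ 1)]
    have : ∀ v:ℝ, 0.75*(1-v^2) = 0.75 - 0.75 * v^2 := fun v => by ring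
    simp_rw [this]
    rw [intervalIntegral.integral_sub intervalIntegrable_const
      (show IntervalIntegrable (fun x : ℝ => (0.75:ℝ) * x ^ 2) volume (-1) 1 from (continuous_const.mul (continuous_pow 2)).intervalIntegrable _ _),
      intervalIntegral.integral_const, intervalIntegral.integral_const_mul, integral_pow]
    norm_num
  have ig1 : ∫ v in I, (0.75 * (1 - v ^ 2)) * v = 0 := by
    rw [hI, MeasureTheory.integral_Icc_eq_integral_Ioc,
      ← intervalIntegral.integral_of_le (by norm_num : (-1:ℝ) ≤ 1)]
    have : ∀ v:ℝ, 0.75*(1-v^2) * v = 0.75 * v^1 - 0.75 * v^3 := fun v => by ring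
    simp_rw [this]
    rw [intervalIntegral.integral_sub (show IntervalIntegrable (fun x : ℝ => (0.75:ℝ) * x ^ 1) volume (-1) 1 from (continuous_const.mul (continuous_pow 1)).intervalIntegrable _ _)
      (show IntervalIntegrable (fun x : ℝ => (0.75:ℝ) * x ^ 3) volume (-1) 1 from (continuous_const.mul (continuous_pow 3)).intervalIntegrable _ _),
      intervalIntegral.integral_const_mul, intervalIntegral.integral_const_mul,
      integral_pow, integral_pow]
    norm_num
  have ig2 : ∫ v in I, (0.75 * (1 - v ^ 2)) * v ^ 2 = 1/5 := by
    rw [hI, MeasureTheory.integral_Icc_eq_integral_Ioc,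
      ← intervalIntegral.integral_of_le (by norm_num : (-1:ℝ) ≤ 1)]
    have : ∀ v:ℝ, 0.75*(1-v^2) * v^2 = 0.75 * v^2 - 0.75 * v^4 := fun v => by ring
    simp_rw [this]
    rw [intervalIntegral.integral_sub (show IntervalIntegrable (fun x : ℝ => (0.75:ℝ) * x ^ 2) volume (-1) 1 from (continuous_const.mul (continuous_pow 2)).intervalIntegrable _ _)
      (show IntervalIntegrable (fun x : ℝ => (0.75:ℝ) * x ^ 4) volume (-1) 1 from (continuous_const.mul (continuous_pow 4)).intervalIntegrable _ _),
      intervalIntegral.integral_const_mul, intervalIntegral.integral_const_mul,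
      integral_pow, integral_pow]
    norm_num
  -- integrabilities
  have intR : IntegrableOn
      (fun v => (0.75 * (1 - v ^ 2)) * (f (t + h * v) - f t - f' t * (h * v))) I := by
    refine (cg.continuousOn.mul ((cphi.sub continuousOn_const).sub
      (Continuous.continuousOn (continuous_const.mul (continuous_const.mul continuous_id))))).integrableOn_compact hcomp
  have intg : IntegrableOn (fun v : ℝ => f t * (0.75 * (1 - v ^ 2))) I :=
    ((continuous_const.mul cg).continuousOn).integrableOn_compact hcomp
  have intgv : IntegrableOn (fun v : ℝ => (f' t * h) * ((0.75 * (1 - v ^ 2)) * v)) I :=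
    ((continuous_const.mul (cg.mul continuous_id)).continuousOn).integrableOn_compact hcomp
  -- decomposition
  have edec : (∫ v in I, (0.75 * (1 - v ^ 2)) * f (t + h * v))
      = (∫ v in I, (0.75 * (1 - v ^ 2)) * (f (t + h * v) - f t - f' t * (h * v))) + f t := by
    have hsplit : ∀ v : ℝ, (0.75 * (1 - v ^ 2)) * f (t + h * v)
        = (0.75 * (1 - v ^ 2)) * (f (t + h * v) - f t - f' t * (h * v))
          + f t * (0.75 * (1 - v ^ 2)) + (f' t * h) * ((0.75 * (1 - v ^ 2)) * v) := by
      intro v; ring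
    simp_rw [hsplit]
    have intRg : IntegrableOn (fun v => (0.75 * (1 - v ^ 2)) * (f (t + h * v) - f t - f' t * (h * v))
        + f t * (0.75 * (1 - v ^ 2))) I := intR.add intg
    rw [integral_add intRg intgv, integral_add intR intg,
      integral_const_mul (f t), integral_const_mul (f' t * h), ig0, ig1]
    ring
  rw [edec]
  have hptw : ∀ v ∈ I, |(0.75 * (1 - v ^ 2)) * (f (t + h * v) - f t - f' t * (h * v))|
      ≤ (0.75 * (1 - v ^ 2)) * (M / 2 * (h * v) ^ 2) := by
    intro v hv
    obtain ⟨hv1, hv2⟩ := Set.mem_Icc.mp hv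
    have hg0 : (0:ℝ) ≤ 0.75 * (1 - v ^ 2) := by nlinarith
    rw [abs_mul, abs_of_nonneg hg0]
    refine mul_le_mul_of_nonneg_left ?_ hg0
    have := taylor_aux_stmt13 f f' f'' M hd1 hd2 hb2 t (t + h * v)
      ⟨ht.1.le, ht.2.le⟩ (hmap v hv)
    simpa [add_sub_cancel_left] using this
  have intB : IntegrableOn (fun v : ℝ => (0.75 * (1 - v ^ 2)) * (M / 2 * (h * v) ^ 2)) I :=
    ((cg.mul ((continuous_const.mul ((continuous_const.mul continuous_id).pow 2)))).continuousOn).integrableOn_compact hcomp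
  calc |(∫ v in I, (0.75 * (1 - v ^ 2)) * (f (t + h * v) - f t - f' t * (h * v))) + f t - f t|
      = |∫ v in I, (0.75 * (1 - v ^ 2)) * (f (t + h * v) - f t - f' t * (h * v))| := by
        congr 1; ring
    _ ≤ ∫ v in I, |(0.75 * (1 - v ^ 2)) * (f (t + h * v) - f t - f' t * (h * v))| := by
        exact MeasureTheory.norm_integral_le_integral_norm
          (μ := volume.restrict I)
          (fun v => (0.75 * (1 - v ^ 2)) * (f (t + h * v) - f t - f' t * (h * v)))
    _ ≤ ∫ v in I, (0.75 * (1 - v ^ 2)) * (M / 2 * (h * v) ^ 2) :=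
        setIntegral_mono_on intR.abs intB measurableSet_Icc hptw
    _ = M * h ^ 2 / 10 := by
        have : ∀ v : ℝ, (0.75 * (1 - v ^ 2)) * (M / 2 * (h * v) ^ 2)
            = (M / 2 * h ^ 2) * ((0.75 * (1 - v ^ 2)) * v ^ 2) := fun v => by ring
        simp_rw [this]
        rw [integral_const_mul, ig2]
        ring
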